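/- arXiv:1301.1937 — 2 statements merged into one kernel-verified Lean document; each statement's English description precedes it below -/
import Mathlib

section
/- Let H : ℝ² → ℝ² be of class C² on an open set U (all second partial derivatives exist and are continuous), let F = (M,N) be a differentiable vector field defined on H(U), and define F̂ on U by F̂(x) = (DH(x))ᵀ · F(H(x)). Then for every x ∈ U, scurl F̂(x) = scurl F(H(x)) · det DH(x). -/
/-!
`F̂` is the vector field dual to the pullback `H^*ω` of the 1-form `ω = M dx + N dy`, and the
scalar curl of a field is the value of the exterior derivative of its dual 1-form on `(e₁, e₂)`.
Exterior differentiation commutes with pullback (this is where the symmetry of the second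
derivative of the `C²` map `H` enters), so `d(H^*ω)(e₁, e₂) = dω(DH e₁, DH e₂)`, and on the plane
every 2-form scales by `det DH` under `DH`.
-/

/-- The Euclidean dot product on `ℝ × ℝ`. -/
def dot (u v : ℝ × ℝ) : ℝ := u.1 * v.1 + u.2 * v.2

open Filter Topology ContinuousAlternatingMap

theorem AlternatingMap.map_comp_eq_det_mul {R M ι : Type*} [CommRing R] [AddCommGroup M]
    [Module R M] [Fintype ι] [DecidableEq ι] (f : M [⋀^ι]→ₗ[R] R) (b : Module.Basis ι R M)
    (L : M →ₗ[R] M) (v : ι → M) : f (L ∘ v) = LinearMap.det L * f v := by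
  rw [f.eq_smul_basis_det b]
  simp [Module.Basis.det_comp]
  ring

theorem extDeriv_oneForm_apply {E G : Type*} [NormedAddCommGroup E] [NormedSpace ℝ E]
    [NormedAddCommGroup G] [NormedSpace ℝ G] {ω : E → E [⋀^Fin 1]→L[ℝ] G} {x : E}
    (hω : DifferentiableAt ℝ ω x) (v w : E) :
    extDeriv ω x ![v, w] = fderiv ℝ (ω · ![w]) x v - fderiv ℝ (ω · ![v]) x w := by
  have hremove : Fin.removeNth 1 ![v, w] = ![v] := by
    ext i; fin_cases i; rfl
  simp [extDeriv_apply hω, Fin.sum_univ_two, hremove, sub_eq_add_neg]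

theorem dot_map_eq_dot_transpose (u : ℝ × ℝ) (L : ℝ × ℝ →L[ℝ] ℝ × ℝ) (v : ℝ × ℝ) :
    dot u (L v) = dot (dot u (L (1, 0)), dot u (L (0, 1))) v := by
  have hv : v = v.1 • (1, 0) + v.2 • (0, 1) := by simp
  conv_lhs => rw [hv]
  simp only [map_add, map_smul, dot, Prod.fst_add, Prod.snd_add, Prod.smul_fst, Prod.smul_snd,
    smul_eq_mul]
  ring

noncomputable def dotCLM (u : ℝ × ℝ) : (ℝ × ℝ) →L[ℝ] ℝ :=
  u.1 • ContinuousLinearMap.fst ℝ ℝ ℝ + u.2 • ContinuousLinearMap.snd ℝ ℝ ℝ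

/-- The 1-form `F.1 dx + F.2 dy`. -/
noncomputable def planeForm (F : ℝ × ℝ → ℝ × ℝ) (y : ℝ × ℝ) : (ℝ × ℝ) [⋀^Fin 1]→L[ℝ] ℝ :=
  ofSubsingletonLIE (0 : Fin 1) (dotCLM (F y))

@[simp] theorem planeForm_apply (F : ℝ × ℝ → ℝ × ℝ) (y : ℝ × ℝ) (v : Fin 1 → ℝ × ℝ) :
    planeForm F y v = dot (F y) (v 0) := by
  simp [planeForm, dotCLM, dot, ofSubsingletonLIE]

theorem DifferentiableAt.planeForm {F : ℝ × ℝ → ℝ × ℝ} {x : ℝ × ℝ}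
    (hF : DifferentiableAt ℝ F x) : DifferentiableAt ℝ (planeForm F) x :=
  (ofSubsingletonLIE (𝕜 := ℝ) (E := ℝ × ℝ) (F := ℝ) (0 : Fin 1)).toContinuousLinearEquiv
    |>.differentiableAt.comp x ((hF.fst.smul_const _).add (hF.snd.smul_const _))

noncomputable def scurl (F : ℝ × ℝ → ℝ × ℝ) (x : ℝ × ℝ) : ℝ :=
  fderiv ℝ (fun p => (F p).2) x (1, 0) - fderiv ℝ (fun p => (F p).1) x (0, 1)

theorem extDeriv_planeForm_apply {F : ℝ × ℝ → ℝ × ℝ} {x : ℝ × ℝ}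
    (hF : DifferentiableAt ℝ (planeForm F) x) :
    extDeriv (planeForm F) x ![(1, 0), (0, 1)] = scurl F x := by
  rw [extDeriv_oneForm_apply hF]
  simp [dot, scurl]

/-- Let `H` be of class C² on an open set `U`, let `F = (M, N)` be a
differentiable vector field on `H(U)`, and let `F̂ (x) = (DH(x))ᵀ F(H x)` be the
pulled-back vector field on `U`.  Then at every `x ∈ U`,
`scurl F̂ (x) = scurl F (H x) · det DH(x)`. -/
theorem scurl_pullback
    (U : Set (ℝ × ℝ)) (hU : IsOpen U)
    (H : ℝ × ℝ → ℝ × ℝ) (hH : ContDiffOn ℝ 2 H U)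
    (M N : ℝ × ℝ → ℝ)
    (hM : ∀ y ∈ H '' U, DifferentiableAt ℝ M y)
    (hN : ∀ y ∈ H '' U, DifferentiableAt ℝ N y)
    (Fhat : ℝ × ℝ → ℝ × ℝ)
    (hFhat : ∀ x ∈ U,
      Fhat x = (dot (M (H x), N (H x)) (fderiv ℝ H x (1, 0)),
                dot (M (H x), N (H x)) (fderiv ℝ H x (0, 1)))) :
    ∀ x ∈ U,
      fderiv ℝ (fun p => (Fhat p).2) x (1, 0)
          - fderiv ℝ (fun p => (Fhat p).1) x (0, 1)
        = (fderiv ℝ N (H x) (1, 0) - fderiv ℝ M (H x) (0, 1))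
            * (fderiv ℝ H x).det := by
  intro x hx
  set F : ℝ × ℝ → ℝ × ℝ := fun y => (M y, N y)
  have hHx : ContDiffAt ℝ 2 H x := hH.contDiffAt (hU.mem_nhds hx)
  have hF : DifferentiableAt ℝ (planeForm F) (H x) :=
    ((hM _ ⟨x, hx, rfl⟩).prodMk (hN _ ⟨x, hx, rfl⟩)).planeForm
  have hpull : (fun y => (planeForm F (H y)).compContinuousLinearMap (fderiv ℝ H y))
      =ᶠ[𝓝 x] planeForm Fhat := by
    filter_upwards [hU.mem_nhds hx] with y hy
    ext v
    simp only [compContinuousLinearMap_apply, planeForm_apply, Function.comp_apply]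
    rw [dot_map_eq_dot_transpose, hFhat y hy]
  have hFhat' : DifferentiableAt ℝ (planeForm Fhat) x :=
    hpull.differentiableAt_iff.mp <| (hF.comp x (hHx.differentiableAt two_ne_zero))
      |>.continuousAlternatingMapCompContinuousLinearMap
        ((hHx.fderiv_right le_rfl).differentiableAt one_ne_zero)
  calc scurl Fhat x
      = extDeriv (fun y => (planeForm F (H y)).compContinuousLinearMap (fderiv ℝ H y)) x
          ![(1, 0), (0, 1)] := by
        rw [hpull.extDeriv_eq, extDeriv_planeForm_apply hFhat']
    _ = extDeriv (planeForm F) (H x) (fderiv ℝ H x ∘ ![(1, 0), (0, 1)]) := by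
        rw [extDeriv_pullback hF hHx minSmoothness_of_isRCLikeNormedField.le]; rfl
    _ = (fderiv ℝ H x).det * extDeriv (planeForm F) (H x) ![(1, 0), (0, 1)] :=
        (extDeriv (planeForm F) (H x)).toAlternatingMap.map_comp_eq_det_mul
          (Module.Basis.finTwoProd ℝ) _ _
    _ = _ := by rw [extDeriv_planeForm_apply hF, mul_comm]; rfl
end

section
/- Let a = x₀ < x₁ < ⋯ < x_m = b and c = y₀ < y₁ < ⋯ < y_n = d be partitions, and let F = (M,N) be a continuous vector field on [a,b] × [c,d]. Then the sum over all i ∈ {0,…,m−1} and j ∈ {0,…,n−1} of the counterclockwise circulation of F around the boundary of the subrectangle [x_i, x_{i+1}] × [y_j, y_{j+1}] equals the counterclockwise circulation of F around the boundary of the whole rectangle [a,b] × [c,d]; the contributions from all interior edges cancel in pairs. -/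
open MeasureTheory

/-- The counterclockwise circulation of the vector field `(M, N)` around the
boundary of the rectangle `[p,q] × [r,s]`. -/
noncomputable def circulation (M N : ℝ × ℝ → ℝ) (p q r s : ℝ) : ℝ :=
  (∫ t in p..q, M (t, r)) + (∫ t in r..s, N (q, t))
    - (∫ t in p..q, M (t, s)) - (∫ t in r..s, N (p, t))

/-! The whole rectangle is cut into columns and each column into cells. Circulation is additive
when a rectangle is split in two, because the integrals along the common edge are traversed
once in each direction and the integrals along the split edges add up by additivity of the
interval integral. Adding up along a partition is then a telescoping argument. -/

theorem Fin.sum_castSucc_succ_eq_of_add_eq {α G : Type*} [AddCommGroup G] {s : Set α}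
    (g : α → α → G) (hg : ∀ a ∈ s, ∀ b ∈ s, ∀ c ∈ s, g a b + g b c = g a c) :
    ∀ {n : ℕ} (y : Fin (n + 1) → α), (∀ k, y k ∈ s) →
      ∑ j : Fin n, g (y j.castSucc) (y j.succ) = g (y 0) (y (Fin.last n))
  | 0, y, hy => by
    simpa using (add_eq_right.mp (hg _ (hy 0) _ (hy 0) _ (hy 0))).symm
  | n + 1, y, hy => by
    rw [Fin.sum_univ_castSucc]
    simp only [Fin.succ_castSucc]
    rw [Fin.sum_castSucc_succ_eq_of_add_eq g hg (fun k => y k.castSucc) (fun k => hy _)]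
    exact hg _ (hy _) _ (hy _) _ (hy _)

theorem circulation_add_vertically_adjacent {M N : ℝ × ℝ → ℝ} {p q r s u : ℝ}
    (hp₁ : IntervalIntegrable (fun t => N (p, t)) volume r s)
    (hp₂ : IntervalIntegrable (fun t => N (p, t)) volume s u)
    (hq₁ : IntervalIntegrable (fun t => N (q, t)) volume r s)
    (hq₂ : IntervalIntegrable (fun t => N (q, t)) volume s u) :
    circulation M N p q r s + circulation M N p q s u = circulation M N p q r u := by
  unfold circulation
  rw [← intervalIntegral.integral_add_adjacent_intervals hp₁ hp₂,
    ← intervalIntegral.integral_add_adjacent_intervals hq₁ hq₂]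
  ring

theorem circulation_add_horizontally_adjacent {M N : ℝ × ℝ → ℝ} {p q w r s : ℝ}
    (hr₁ : IntervalIntegrable (fun t => M (t, r)) volume p q)
    (hr₂ : IntervalIntegrable (fun t => M (t, r)) volume q w)
    (hs₁ : IntervalIntegrable (fun t => M (t, s)) volume p q)
    (hs₂ : IntervalIntegrable (fun t => M (t, s)) volume q w) :
    circulation M N p q r s + circulation M N q w r s = circulation M N p w r s := by
  unfold circulation
  rw [← intervalIntegral.integral_add_adjacent_intervals hr₁ hr₂,
    ← intervalIntegral.integral_add_adjacent_intervals hs₁ hs₂]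
  ring

theorem ContinuousOn.intervalIntegrable_of_mem_Icc {f : ℝ → ℝ} {a b u v : ℝ}
    (hf : ContinuousOn f (Set.Icc a b)) (hu : u ∈ Set.Icc a b) (hv : v ∈ Set.Icc a b) :
    IntervalIntegrable f volume u v :=
  (hf.mono (Set.uIcc_subset_Icc hu hv)).intervalIntegrable

theorem Monotone.mem_Icc_zero_last {β : Type*} [Preorder β] {n : ℕ} {x : Fin (n + 1) → β}
    (hx : Monotone x) (k : Fin (n + 1)) :
    x k ∈ Set.Icc (x 0) (x (Fin.last n)) :=
  ⟨hx (Fin.zero_le k), hx (Fin.le_last k)⟩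

/-- **The Whirl theorem for a rectangular grid.**  Given partitions
`a = x₀ < x₁ < ⋯ < x_m = b` and `c = y₀ < y₁ < ⋯ < y_n = d` and a continuous
vector field `F = (M, N)` on `[a,b] × [c,d]`, the sum over all subrectangles
`[xᵢ, xᵢ₊₁] × [yⱼ, yⱼ₊₁]` of the counterclockwise circulation of `F` around the
subrectangle's boundary equals the counterclockwise circulation of `F` around
the boundary of the whole rectangle. -/
theorem sum_circulation_subrectangles
    (a b c d : ℝ) (m n : ℕ)
    (x : Fin (m + 1) → ℝ) (y : Fin (n + 1) → ℝ)
    (hx : StrictMono x) (hy : StrictMono y)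
    (hx0 : x 0 = a) (hxm : x (Fin.last m) = b)
    (hy0 : y 0 = c) (hyn : y (Fin.last n) = d)
    (M N : ℝ × ℝ → ℝ)
    (hM : ContinuousOn M (Set.Icc a b ×ˢ Set.Icc c d))
    (hN : ContinuousOn N (Set.Icc a b ×ˢ Set.Icc c d)) :
    ∑ i : Fin m, ∑ j : Fin n,
        circulation M N (x i.castSucc) (x i.succ) (y j.castSucc) (y j.succ)
      = circulation M N a b c d := by
  have hxab : ∀ k, x k ∈ Set.Icc a b := hx0 ▸ hxm ▸ hx.monotone.mem_Icc_zero_last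
  have hycd : ∀ k, y k ∈ Set.Icc c d := hy0 ▸ hyn ▸ hy.monotone.mem_Icc_zero_last
  have column : ∀ p ∈ Set.Icc a b, ∀ q ∈ Set.Icc a b,
      ∑ j : Fin n, circulation M N p q (y j.castSucc) (y j.succ) = circulation M N p q c d := by
    intro p hp q hq
    rw [← hy0, ← hyn]
    refine Fin.sum_castSucc_succ_eq_of_add_eq (circulation M N p q)
      (fun r hr s hs u hu => ?_) y hycd
    have hNp := hN.uncurry_left (f := Function.curry N) p hp
    have hNq := hN.uncurry_left (f := Function.curry N) q hq
    exact circulation_add_vertically_adjacent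
      (hNp.intervalIntegrable_of_mem_Icc hr hs) (hNp.intervalIntegrable_of_mem_Icc hs hu)
      (hNq.intervalIntegrable_of_mem_Icc hr hs) (hNq.intervalIntegrable_of_mem_Icc hs hu)
  have hcd : c ≤ d := hy0 ▸ hyn ▸ hy.monotone (Fin.zero_le _)
  have hMc := hM.uncurry_right (f := Function.curry M) c (Set.left_mem_Icc.mpr hcd)
  have hMd := hM.uncurry_right (f := Function.curry M) d (Set.right_mem_Icc.mpr hcd)
  calc ∑ i : Fin m, ∑ j : Fin n,
        circulation M N (x i.castSucc) (x i.succ) (y j.castSucc) (y j.succ)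
      = ∑ i : Fin m, circulation M N (x i.castSucc) (x i.succ) c d :=
        Finset.sum_congr rfl fun i _ => column _ (hxab _) _ (hxab _)
    _ = circulation M N a b c d := by
        rw [← hx0, ← hxm]
        refine Fin.sum_castSucc_succ_eq_of_add_eq (fun p q => circulation M N p q c d)
          (fun p hp q hq w hw => ?_) x hxab
        exact circulation_add_horizontally_adjacent
          (hMc.intervalIntegrable_of_mem_Icc hp hq) (hMc.intervalIntegrable_of_mem_Icc hq hw)
          (hMd.intervalIntegrable_of_mem_Icc hp hq) (hMd.intervalIntegrable_of_mem_Icc hq hw)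
end
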